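/- Every complex root of the polynomial h(x) = x^4 - (131/100) x^3 + (12409/14400) x^2 - (131/100) x + 1 has absolute value 1. -/

import Mathlib

/-!
Since `h` is self-reciprocal, it factors over `ℝ` as `(z² - r z + 1)(z² - s z + 1)`, where `r, s`
are the roots of `w² - (131/100) w - 16391/14400`, i.e. the possible values of `w = z + z⁻¹`.
Both lie in `[-2, 2]`, and a root of `z² - a z + 1` with real `a ∈ [-2, 2]` lies on the unit
circle: either it is non-real and then `a = 2 Re z` forces `|z| = 1`, or it is real and
then `(z - a/2)² = a²/4 - 1 ≤ 0` forces `z = a/2 = ±1`.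
-/

theorem palindromic_quartic_eq_mul {R : Type*} [CommRing R] (x r s : R) :
    x ^ 4 - (r + s) * x ^ 3 + (r * s + 2) * x ^ 2 - (r + s) * x + 1 =
      (x ^ 2 - r * x + 1) * (x ^ 2 - s * x + 1) := by
  ring

theorem Complex.norm_eq_one_of_sq_sub_mul_add_one_eq_zero {a : ℝ} (ha : a ^ 2 ≤ 4) {z : ℂ}
    (hz : z ^ 2 - a * z + 1 = 0) : ‖z‖ = 1 := by
  have hre : z.re ^ 2 - z.im ^ 2 - a * z.re + 1 = 0 := by
    simpa [sq] using congrArg Complex.re hz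
  have him : z.im * (2 * z.re - a) = 0 := by
    have := congrArg Complex.im hz
    simp only [sq, Complex.sub_im, Complex.add_im, Complex.mul_im, Complex.ofReal_re,
      Complex.ofReal_im, Complex.one_im, Complex.zero_im] at this
    linear_combination this
  have hnormSq : z.re ^ 2 + z.im ^ 2 = 1 := by
    rcases mul_eq_zero.1 him with hy | hx
    · rw [hy] at hre ⊢
      nlinarith [sq_nonneg (2 * z.re - a)]
    · have : a = 2 * z.re := by linarith
      subst this
      linarith
  rw [Complex.norm_eq_sqrt_sq_add_sq, hnormSq, Real.sqrt_one]

theorem Complex.norm_eq_one_of_palindromic_quartic_eq_zero {r s : ℝ} (hr : r ^ 2 ≤ 4)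
    (hs : s ^ 2 ≤ 4) {z : ℂ}
    (hz : z ^ 4 - (r + s) * z ^ 3 + (r * s + 2) * z ^ 2 - (r + s) * z + 1 = 0) : ‖z‖ = 1 := by
  rw [palindromic_quartic_eq_mul] at hz
  rcases mul_eq_zero.1 hz with hz | hz
  · exact norm_eq_one_of_sq_sub_mul_add_one_eq_zero hr hz
  · exact norm_eq_one_of_sq_sub_mul_add_one_eq_zero hs hz

theorem h8_roots_on_unit_circle (z : ℂ)
    (hz : z ^ 4 - (131/100) * z^3 + (12409/14400) * z^2 - (131/100) * z + 1 = 0) :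
    ‖z‖ = 1 := by
  set u : ℝ := √(8816 / 5625)
  have hu_sq : u ^ 2 = 8816 / 5625 := Real.sq_sqrt (by norm_num)
  have hu_nonneg : 0 ≤ u := Real.sqrt_nonneg _
  have hu_le : u ≤ 3 / 2 := by nlinarith
  apply Complex.norm_eq_one_of_palindromic_quartic_eq_zero (r := 131 / 200 + u)
    (s := 131 / 200 - u) (by nlinarith) (by nlinarith)
  have hu_sq' : (u : ℂ) ^ 2 = 8816 / 5625 := by
    rw [← Complex.ofReal_pow, hu_sq]
    norm_num
  push_cast
  linear_combination hz - z ^ 2 * hu_sq'
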